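/- Let h : [t₀,∞)² → [0,∞) be bounded (say h ≤ K), satisfy h(t,s) → 0 as t → ∞ for each fixed s, and the submultiplicativity h(t,s) ≤ h(t,T)·h(T,s) whenever t ≥ T ≥ s. Let φ : [t₀,∞) → [0,∞) be integrable on [t₀,∞). Then Θ(t) := ∫_{t₀}^{t} h(t,s) φ(s) ds + ∫_{t}^{∞} φ(s) ds satisfies Θ(t) → 0 as t → ∞. -/

import Mathlib

open Filter Set MeasureTheory intervalIntegral Topology

/-!
Fix a large `T`. On `[t₀, T]` submultiplicativity gives `h t s ≤ h t T * K`, so that part of the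
first integral is at most `h t T * K * ∫_{t₀}^∞ φ`, which tends to `0` as `t → ∞`; on `[T, t]`
the bound `h ≤ K` leaves at most `K * ∫_T^∞ φ`, which is small once `T` is large.
-/

theorem tendsto_zero_of_le_add {α β : Type*} {l : Filter α} {l' : Filter β} [l'.NeBot]
    {u : α → ℝ} {a : β → α → ℝ} {b : β → ℝ} (hu : ∀ᶠ x in l, 0 ≤ u x)
    (ha : ∀ᶠ T in l', Tendsto (a T) l (𝓝 0)) (hb : Tendsto b l' (𝓝 0))
    (hle : ∀ᶠ T in l', ∀ᶠ x in l, u x ≤ a T x + b T) :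
    Tendsto u l (𝓝 0) := by
  refine tendsto_order.2 ⟨fun c hc => hu.mono fun x hx => hc.trans_le hx, fun ε hε => ?_⟩
  obtain ⟨T, haT, hbT, hleT⟩ :=
    (ha.and ((hb.eventually (gt_mem_nhds (half_pos hε))).and hle)).exists
  filter_upwards [haT.eventually (gt_mem_nhds (half_pos hε)), hleT] with x hax hx
  linarith

section Kernel

variable {t₀ K T t : ℝ} {h : ℝ → ℝ → ℝ} {φ : ℝ → ℝ}
  (hhnn : ∀ t s, t₀ ≤ s → s ≤ t → 0 ≤ h t s)
  (hhK : ∀ t s, t₀ ≤ s → s ≤ t → h t s ≤ K)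
  (hsub : ∀ t T s, t₀ ≤ s → s ≤ T → T ≤ t → h t s ≤ h t T * h T s)
  (hφnn : ∀ s, t₀ ≤ s → 0 ≤ φ s)
include hhnn hhK hsub hφnn

theorem kernel_mul_le_add_indicator (hT : t₀ ≤ T) (hTt : T ≤ t) {s : ℝ} (hs₀ : t₀ ≤ s)
    (hst : s ≤ t) :
    h t s * φ s ≤ h t T * K * φ s + K * (Ioi T).indicator φ s := by
  have hK : 0 ≤ K := (hhnn T T hT le_rfl).trans (hhK T T hT le_rfl)
  have hφs := hφnn s hs₀
  rcases le_or_gt s T with hsT | hTs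
  · have hind : 0 ≤ K * (Ioi T).indicator φ s :=
      mul_nonneg hK (indicator_nonneg (fun _ _ => hφs) s)
    have hts : h t s ≤ h t T * K :=
      (hsub t T s hs₀ hsT hTt).trans
        (mul_le_mul_of_nonneg_left (hhK T s hs₀ hsT) (hhnn t T hT hTt))
    nlinarith
  · rw [indicator_of_mem (mem_Ioi.2 hTs)]
    have hfirst : 0 ≤ h t T * K * φ s := mul_nonneg (mul_nonneg (hhnn t T hT hTt) hK) hφs
    nlinarith [hhK t s hs₀ hst]

theorem setIntegral_kernel_mul_le (hφint : IntegrableOn φ (Ioi t₀)) (hT : t₀ ≤ T)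
    (hTt : T ≤ t) :
    ∫ s in Ioc t₀ t, h t s * φ s ≤
      h t T * K * (∫ s in Ioi t₀, φ s) + K * ∫ s in Ioi T, φ s := by
  have hK : 0 ≤ K := (hhnn T T hT le_rfl).trans (hhK T T hT le_rfl)
  have hφIoc : IntegrableOn φ (Ioc t₀ t) := hφint.mono_set Ioc_subset_Ioi_self
  have hφIoi_T : IntegrableOn φ (Ioi T) := hφint.mono_set (Ioi_subset_Ioi hT)
  have hφnn_on : ∀ a, t₀ ≤ a → 0 ≤ᵐ[volume.restrict (Ioi a)] φ := fun a ha =>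
    (ae_restrict_iff' measurableSet_Ioi).2 <|
      .of_forall fun s hs => hφnn s (ha.trans (le_of_lt hs))
  calc ∫ s in Ioc t₀ t, h t s * φ s
      ≤ ∫ s in Ioc t₀ t, (h t T * K * φ s + K * (Ioi T).indicator φ s) := by
        refine integral_mono_of_nonneg ?_
          ((hφIoc.const_mul _).add ((hφIoc.indicator measurableSet_Ioi).const_mul K)) ?_
        all_goals
          refine (ae_restrict_iff' measurableSet_Ioc).2 (.of_forall fun s hs => ?_)
        · exact mul_nonneg (hhnn t s hs.1.le hs.2) (hφnn s hs.1.le)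
        · exact kernel_mul_le_add_indicator hhnn hhK hsub hφnn hT hTt hs.1.le hs.2
    _ = h t T * K * (∫ s in Ioc t₀ t, φ s) + K * ∫ s in Ioc t₀ t ∩ Ioi T, φ s := by
        rw [integral_add (hφIoc.const_mul _) ((hφIoc.indicator measurableSet_Ioi).const_mul K),
          MeasureTheory.integral_const_mul, MeasureTheory.integral_const_mul,
          setIntegral_indicator measurableSet_Ioi]
    _ ≤ h t T * K * (∫ s in Ioi t₀, φ s) + K * ∫ s in Ioi T, φ s := by
        gcongr
        · exact mul_nonneg (hhnn t T hT hTt) hK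
        · exact hφnn_on t₀ le_rfl
        · exact Ioc_subset_Ioi_self
        · exact hφnn_on T hT
        · exact inter_subset_right

end Kernel

/-- If h ≥ 0 is bounded by K, h(t,s) → 0 as t → ∞ for fixed s,
h(t,s) ≤ h(t,T)h(T,s) for t ≥ T ≥ s, and φ ≥ 0 is integrable on [t₀,∞), then
Θ(t) = ∫_{t₀}^t h(t,s)φ(s)ds + ∫_t^∞ φ(s)ds → 0 as t → ∞. -/
theorem stmt_3 (t₀ K : ℝ) (h : ℝ → ℝ → ℝ) (φ : ℝ → ℝ)
    (hhnn : ∀ t s, t₀ ≤ s → s ≤ t → 0 ≤ h t s)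
    (hhK : ∀ t s, t₀ ≤ s → s ≤ t → h t s ≤ K)
    (hlim : ∀ s, t₀ ≤ s → Tendsto (fun t => h t s) atTop (nhds 0))
    (hsub : ∀ t T s, t₀ ≤ s → s ≤ T → T ≤ t → h t s ≤ h t T * h T s)
    (hφnn : ∀ s, t₀ ≤ s → 0 ≤ φ s)
    (hφint : IntegrableOn φ (Set.Ici t₀)) :
    Tendsto (fun t => (∫ s in t₀..t, h t s * φ s) + ∫ s in Set.Ioi t, φ s)
      atTop (nhds 0) := by
  have htail : Tendsto (fun T => ∫ s in Ioi T, φ s) atTop (𝓝 0) :=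
    tendsto_integral_Ioi_zero tendsto_id
  refine tendsto_zero_of_le_add
    (a := fun T t => h t T * K * (∫ s in Ioi t₀, φ s) + ∫ s in Ioi t, φ s)
    (b := fun T => K * ∫ s in Ioi T, φ s) ?_ ?_ (by simpa using htail.const_mul K) ?_
  · filter_upwards [eventually_ge_atTop t₀] with t ht
    exact add_nonneg
      (integral_nonneg ht fun s hs => mul_nonneg (hhnn t s hs.1 hs.2) (hφnn s hs.1))
      (setIntegral_nonneg measurableSet_Ioi fun s hs => hφnn s (ht.trans hs.le))
  · filter_upwards [eventually_ge_atTop t₀] with T hT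
    simpa using ((hlim T hT).mul_const K).mul_const _ |>.add htail
  · filter_upwards [eventually_ge_atTop t₀] with T hT
    filter_upwards [eventually_ge_atTop T] with t hTt
    rw [integral_of_le (hT.trans hTt)]
    linarith [setIntegral_kernel_mul_le hhnn hhK hsub hφnn
      (hφint.mono_set Ioi_subset_Ici_self) hT hTt]
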